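/- Let x₀ ∈ H with 0 < ‖x₀‖ < 1. Set a = 1/Real.sqrt (1 − ‖x₀‖²), ξ = −a·x₀ (so a = Real.sqrt (1 + ‖ξ‖²)), and let A be the bounded operator A x = x + ((a−1)/‖ξ‖²)·⟨x,ξ⟩·ξ. Then for every x ∈ H with ‖x‖ < 1 one has ⟨x,ξ⟩ + a ≠ 0, 1 − ⟨x,x₀⟩ ≠ 0, and (⟨x,ξ⟩ + a)⁻¹·(A x + ξ) = T_{x₀}((1 − ⟨x,x₀⟩)⁻¹·(x − x₀)), where T_{x₀} : H → H is the linear map T_{x₀}(y) = (⟨y,x₀⟩/(1 + Real.sqrt (1 − ‖x₀‖²)))·x₀ + Real.sqrt (1 − ‖x₀‖²)·y. -/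
import Mathlib


open scoped InnerProductSpace

/-- For `x₀` with `0 < ‖x₀‖ < 1`, `a = 1/√(1 − ‖x₀‖²)`, `ξ = −a·x₀` and
`A x = x + ((a−1)/‖ξ‖²)·⟨x,ξ⟩·ξ`, we have `a = √(1 + ‖ξ‖²)` and for every `x` with `‖x‖ < 1`:
`⟨x,ξ⟩ + a ≠ 0`, `1 − ⟨x,x₀⟩ ≠ 0` and
`(⟨x,ξ⟩ + a)⁻¹·(A x + ξ) = T_{x₀}((1 − ⟨x,x₀⟩)⁻¹·(x − x₀))`, where
`T_{x₀}(y) = (⟨y,x₀⟩/(1 + √(1 − ‖x₀‖²)))·x₀ + √(1 − ‖x₀‖²)·y`.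
(The paper's inner product `⟨x,y⟩` is linear in the first slot, i.e. `⟪y,x⟫_ℂ` in Mathlib's
convention.) -/
theorem stmt3 {H : Type*} [NormedAddCommGroup H] [InnerProductSpace ℂ H]
    (x₀ : H) (hx₀ : 0 < ‖x₀‖) (hx₀' : ‖x₀‖ < 1)
    (a : ℝ) (ha : a = 1 / Real.sqrt (1 - ‖x₀‖ ^ 2))
    (ξ : H) (hξ : ξ = -((a : ℂ) • x₀))
    (A : H →L[ℂ] H)
    (hA : ∀ x : H, A x = x + ((((a - 1) / ‖ξ‖ ^ 2 : ℝ) : ℂ) * ⟪ξ, x⟫_ℂ) • ξ) :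
    a = Real.sqrt (1 + ‖ξ‖ ^ 2) ∧
      ∀ x : H, ‖x‖ < 1 →
        ⟪ξ, x⟫_ℂ + (a : ℂ) ≠ 0 ∧ 1 - ⟪x₀, x⟫_ℂ ≠ 0 ∧
          (⟪ξ, x⟫_ℂ + (a : ℂ))⁻¹ • (A x + ξ) =
            (⟪x₀, (1 - ⟪x₀, x⟫_ℂ)⁻¹ • (x - x₀)⟫_ℂ /
                (1 + (Real.sqrt (1 - ‖x₀‖ ^ 2) : ℝ))) • x₀ +
              ((Real.sqrt (1 - ‖x₀‖ ^ 2) : ℝ) : ℂ) • ((1 - ⟪x₀, x⟫_ℂ)⁻¹ • (x - x₀)) := by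
  have hr : 0 < ‖x₀‖ := hx₀
  have hr2 : (0:ℝ) < 1 - ‖x₀‖ ^ 2 := by nlinarith
  set r : ℝ := ‖x₀‖ with hrdef
  set s : ℝ := Real.sqrt (1 - r ^ 2) with hsdef
  have hs : 0 < s := Real.sqrt_pos.mpr hr2
  have hs2 : s ^ 2 = 1 - r ^ 2 := Real.sq_sqrt hr2.le
  have ha0 : 0 < a := by rw [ha]; positivity
  have hnξ : ‖ξ‖ = a * r := by
    rw [hξ, norm_neg, norm_smul, Complex.norm_real, Real.norm_of_nonneg ha0.le]
  have hsC : ((s:ℂ)) ≠ 0 := by exact_mod_cast hs.ne'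
  have hrC : ((r:ℂ)) ≠ 0 := by exact_mod_cast hr.ne'
  have haC : ((a:ℂ)) ≠ 0 := by exact_mod_cast ha0.ne'
  have haS : (a:ℂ) * (s:ℂ) = 1 := by
    rw [ha]; push_cast; field_simp
  have hs2C : (s:ℂ) ^ 2 = 1 - (r:ℂ) ^ 2 := by exact_mod_cast hs2
  refine ⟨?_, ?_⟩
  · rw [hnξ, ha]
    have : 1 + (1 / s * r) ^ 2 = (1 / s) ^ 2 := by
      field_simp
      nlinarith
    rw [this, Real.sqrt_sq (by positivity)]
  · intro x hx
    set c : ℂ := ⟪x₀, x⟫_ℂ with hcdef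
    have hc : ‖c‖ < 1 := by
      calc ‖c‖ ≤ ‖x₀‖ * ‖x‖ := norm_inner_le_norm x₀ x
        _ < 1 := by nlinarith
    have hc1 : 1 - c ≠ 0 := by
      intro h
      have : c = 1 := by linear_combination -h
      rw [this] at hc; simp at hc
    have hinner : ⟪ξ, x⟫_ℂ = -((a:ℂ) * c) := by
      rw [hξ, inner_neg_left, inner_smul_left, Complex.conj_ofReal]
    have hne : ⟪ξ, x⟫_ℂ + (a:ℂ) ≠ 0 := by
      rw [hinner]
      have : -((a:ℂ) * c) + a = (a:ℂ) * (1 - c) := by ring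
      rw [this]
      exact mul_ne_zero haC hc1
    refine ⟨hne, hc1, ?_⟩
    have hs1 : s < 1 := by nlinarith [hs2, hr]
    have h2 : ⟪x₀, (1 - c)⁻¹ • (x - x₀)⟫_ℂ = (1 - c)⁻¹ * (c - 1 + (s:ℂ) ^ 2) := by
      have hx0 : ⟪x₀, x₀⟫_ℂ = ((r ^ 2 : ℝ) : ℂ) := by
        rw [inner_self_eq_norm_sq_to_K, ← hrdef]; norm_cast
      rw [inner_smul_right, inner_sub_right, ← hcdef, hx0]
      rw [show ((r ^ 2 : ℝ) : ℂ) = 1 - (s:ℂ) ^ 2 by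
        push_cast; linear_combination hs2C]
      ring
    have hcoef : ((a - 1) / ‖ξ‖ ^ 2 : ℝ) = s / (1 + s) := by
      rw [hnξ, ha]
      have h1s' : (1:ℝ) + s ≠ 0 := by positivity
      field_simp
      nlinarith [hs2]
    have hinv : (-((a:ℂ) * c) + (a:ℂ))⁻¹ = (s:ℂ) * (1 - c)⁻¹ := by
      rw [show -((a:ℂ) * c) + (a:ℂ) = (a:ℂ) * (1 - c) by ring, mul_inv,
        inv_eq_of_mul_eq_one_right haS]
    have haC' : (a:ℂ) = (s:ℂ)⁻¹ := by
      rw [ha]; push_cast; ring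
    have h1s : (1:ℂ) + (s:ℂ) ≠ 0 := by
      intro h
      have : (1:ℝ) + s = 0 := by exact_mod_cast h
      linarith
    rw [hA, hinner, hcoef, h2, hinv, hξ, haC']
    push_cast
    match_scalars
    · field_simp
    · have hw : (s:ℂ) * (s:ℂ)⁻¹ = 1 := mul_inv_cancel₀ hsC
      have hv : (1 + (s:ℂ)) * (1 + (s:ℂ))⁻¹ = 1 := mul_inv_cancel₀ h1s
      linear_combination
        ((s:ℂ) * (1 - c)⁻¹ * (1 + (s:ℂ))⁻¹ * (s:ℂ)⁻¹ * c
          + (1 - c)⁻¹ * (1 + (s:ℂ))⁻¹ * c - (1 - c)⁻¹) * hw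
        + ((1 - c)⁻¹ * (1 - (s:ℂ))) * hv
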